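/- Consider the positive linear system Σ: dx/dt = Fx + Gw, y = Hx, where F is an n_x×n_x Metzler matrix and G ∈ ℝ^{n_x×n_w}, H ∈ ℝ^{n_y×n_x} are entrywise nonnegative. Let γ > 0, and define the row vector H̃ = Σ_{i=1}^{n_y} H_i ⊗ H_i and column vector G̃ = Σ_{j=1}^{n_w} G_j ⊗ G_j, where H_i is the i-th row of H and G_j the j-th column of G. Then F is Hurwitz stable and the H² norm satisfies ‖Σ‖₂² = −H̃ (F ⊕ F)⁻¹ G̃ < γ² if and only if there exists an entrywise positive vector ω ∈ ℝ^{n_x²} with H̃ ω < γ² and (F ⊕ F) ω + G̃ < 0 (entrywise). -/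

import Mathlib

set_option linter.unusedSectionVars false
set_option maxHeartbeats 1000000

open Matrix
open scoped Kronecker

/-- A real square matrix is Metzler if all its off-diagonal entries are nonnegative. -/
def Metzler {n : ℕ} (M : Matrix (Fin n) (Fin n) ℝ) : Prop :=
  ∀ i j, i ≠ j → 0 ≤ M i j

/-- A real square matrix is Hurwitz stable if all its (complex) eigenvalues have
negative real parts. -/
def Hurwitz {m : Type*} [Fintype m] [DecidableEq m] (M : Matrix m m ℝ) : Prop :=
  ∀ μ ∈ spectrum ℂ (M.map (Complex.ofReal ·)), μ.re < 0


lemma mem_spectrum_iff_eigen {n : Type*} [Fintype n] [DecidableEq n] (N : Matrix n n ℂ) (μ : ℂ) :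
    μ ∈ spectrum ℂ N ↔ ∃ v, v ≠ 0 ∧ N.mulVec v = μ • v := by
  rw [spectrum.mem_iff]
  rw [Matrix.isUnit_iff_isUnit_det, isUnit_iff_ne_zero, not_ne_iff,
      ← Matrix.exists_mulVec_eq_zero_iff]
  have h2 : ∀ v : n → ℂ, (algebraMap ℂ (Matrix n n ℂ) μ).mulVec v = μ • v := by
    intro v
    simp [Algebra.algebraMap_eq_smul_one, Matrix.smul_mulVec]
  constructor
  · rintro ⟨v, hv, hveq⟩
    refine ⟨v, hv, ?_⟩
    have : (algebraMap ℂ (Matrix n n ℂ) μ).mulVec v - N.mulVec v = 0 := by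
      rw [← Matrix.sub_mulVec]; exact hveq
    rw [h2] at this
    symm
    exact sub_eq_zero.mp this
  · rintro ⟨v, hv, hveq⟩
    refine ⟨v, hv, ?_⟩
    rw [Matrix.sub_mulVec, hveq, h2, sub_self]

lemma metzler_stable {m : Type*} [Fintype m] [DecidableEq m]
    (M : Matrix m m ℝ) (hM : ∀ i j, i ≠ j → 0 ≤ M i j)
    (ω : m → ℝ) (hω : ∀ i, 0 < ω i) (hneg : ∀ i, M.mulVec ω i < 0) :
    ∀ μ ∈ spectrum ℂ (M.map (Complex.ofReal ·)), μ.re < 0 := by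
  intro μ hμ
  obtain ⟨v, hv, hveq⟩ := (mem_spectrum_iff_eigen _ μ).mp hμ
  have hne : (Finset.univ : Finset m).Nonempty := by
    obtain ⟨j, hj⟩ := Function.ne_iff.mp hv
    exact ⟨j, Finset.mem_univ j⟩
  obtain ⟨i, -, hi⟩ := Finset.exists_max_image Finset.univ (fun j => ‖v j‖ / ω j) hne
  set t := ‖v i‖ / ω i with ht
  have hbound : ∀ j, ‖v j‖ ≤ t * ω j := by
    intro j
    have h1 := hi j (Finset.mem_univ j)
    calc ‖v j‖ = ‖v j‖ / ω j * ω j := by rw [div_mul_cancel₀ _ (hω j).ne']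
      _ ≤ t * ω j := mul_le_mul_of_nonneg_right h1 (hω j).le
  have htpos : 0 < t := by
    obtain ⟨j, hj⟩ := Function.ne_iff.mp hv
    have : (0:ℝ) < ‖v j‖ / ω j := div_pos (by simpa using hj) (hω j)
    exact lt_of_lt_of_le this (hi j (Finset.mem_univ j))
  have hvi : ‖v i‖ = t * ω i := by rw [ht, div_mul_cancel₀ _ (hω i).ne']
  -- eigen equation at row i
  have heig : ∑ j, (M i j : ℂ) * v j = μ * v i := by
    have := congrFun hveq i
    simpa [Matrix.mulVec, dotProduct, Matrix.map_apply] using this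
  have hsplit : (μ - (M i i : ℂ)) * v i = ∑ j ∈ Finset.univ.erase i, (M i j : ℂ) * v j := by
    rw [← Finset.add_sum_erase Finset.univ (fun j => (M i j : ℂ) * v j) (Finset.mem_univ i)]
      at heig
    linear_combination -heig
  have hnormle : ‖μ - (M i i : ℂ)‖ * ‖v i‖ ≤ ∑ j ∈ Finset.univ.erase i, M i j * ‖v j‖ := by
    rw [← norm_mul, hsplit]
    refine (norm_sum_le _ _).trans (le_of_eq ?_)
    refine Finset.sum_congr rfl fun j hj => ?_
    rw [norm_mul, Complex.norm_real]
    rw [Real.norm_of_nonneg (hM i j (Finset.ne_of_mem_erase hj).symm)]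
  have hsum2 : ∑ j ∈ Finset.univ.erase i, M i j * ‖v j‖ ≤ t * (M.mulVec ω i - M i i * ω i) := by
    have h1 : ∑ j ∈ Finset.univ.erase i, M i j * ‖v j‖
        ≤ ∑ j ∈ Finset.univ.erase i, M i j * (t * ω j) := by
      refine Finset.sum_le_sum fun j hj => ?_
      exact mul_le_mul_of_nonneg_left (hbound j) (hM i j (Finset.ne_of_mem_erase hj).symm)
    refine h1.trans (le_of_eq ?_)
    have h2 : M.mulVec ω i = ∑ j, M i j * ω j := rfl
    have h3 : ∑ j ∈ Finset.univ.erase i, M i j * (t * ω j)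
        = t * ∑ j ∈ Finset.univ.erase i, M i j * ω j := by
      rw [Finset.mul_sum]; exact Finset.sum_congr rfl fun j _ => by ring
    have h4 : ∑ j ∈ Finset.univ.erase i, M i j * ω j = M.mulVec ω i - M i i * ω i := by
      rw [h2, ← Finset.add_sum_erase Finset.univ (fun j => M i j * ω j) (Finset.mem_univ i)]
      ring
    rw [h3, h4]
  have hkey : ‖μ - (M i i : ℂ)‖ < -(M i i) := by
    have hlt : t * (M.mulVec ω i - M i i * ω i) < t * (-(M i i) * ω i) := by
      refine mul_lt_mul_of_pos_left ?_ htpos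
      have := hneg i; linarith
    have hA : ‖μ - (M i i : ℂ)‖ * (t * ω i) ≤ t * (M.mulVec ω i - M i i * ω i) := by
      rw [← hvi]; exact hnormle.trans hsum2
    have hB : ‖μ - (M i i : ℂ)‖ * (t * ω i) < -(M i i) * (t * ω i) := by
      refine lt_of_le_of_lt hA (lt_of_lt_of_eq hlt (by ring))
    exact lt_of_mul_lt_mul_right hB (mul_pos htpos (hω i)).le
  have : μ.re - M i i ≤ ‖μ - (M i i : ℂ)‖ := by
    calc μ.re - M i i = (μ - (M i i : ℂ)).re := by simp
      _ ≤ ‖μ - (M i i : ℂ)‖ := Complex.re_le_norm _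
  linarith

section InverseNonneg

variable {m : Type*} [Fintype m] [DecidableEq m]

attribute [local instance] Matrix.linftyOpNormedAddCommGroup Matrix.linftyOpNormedRing
  Matrix.linftyOpNormedAlgebra

noncomputable local instance : CompleteSpace (Matrix m m ℝ) :=
  FiniteDimensional.complete ℝ _

private lemma entry_abs_le_norm (A : Matrix m m ℝ) (i j : m) : ‖A i j‖ ≤ ‖A‖ := by
  have h1 : ‖A i j‖₊ ≤ ∑ k, ‖A i k‖₊ :=
    Finset.single_le_sum (f := fun k => ‖A i k‖₊) (fun k _ => zero_le) (Finset.mem_univ j)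
  have h2 : (∑ k, ‖A i k‖₊) ≤ (Finset.univ : Finset m).sup fun i => ∑ k, ‖A i k‖₊ :=
    Finset.le_sup (f := fun i => ∑ k, ‖A i k‖₊) (Finset.mem_univ i)
  have := h1.trans h2
  rw [Matrix.linfty_opNorm_def]
  exact_mod_cast this

private noncomputable def entryCLM (i j : m) : Matrix m m ℝ →L[ℝ] ℝ :=
  LinearMap.mkContinuous
    { toFun := fun A => A i j, map_add' := fun _ _ => rfl, map_smul' := fun _ _ => rfl } 1
    (fun A => by rw [one_mul]; exact entry_abs_le_norm A i j)

private lemma mul_entries_nonneg {A B : Matrix m m ℝ} (hA : ∀ i j, 0 ≤ A i j)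
    (hB : ∀ i j, 0 ≤ B i j) : ∀ i j, 0 ≤ (A * B) i j := by
  intro i j
  rw [Matrix.mul_apply]
  exact Finset.sum_nonneg fun k _ => mul_nonneg (hA i k) (hB k j)

private lemma pow_entries_nonneg {X : Matrix m m ℝ} (hX : ∀ i j, 0 ≤ X i j) (n : ℕ) :
    ∀ i j, 0 ≤ (X ^ n) i j := by
  induction n with
  | zero => intro i j; rw [pow_zero]; by_cases h : i = j <;>
      simp [Matrix.one_apply, h]
  | succ n ih =>
      rw [pow_succ]
      exact mul_entries_nonneg ih hX

/-- Neumann series: `(1 - X)⁻¹` is entrywise nonnegative for entrywise nonnegative `X`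
with norm less than one. -/
private lemma one_sub_inv_nonneg {X : Matrix m m ℝ} (hX : ∀ i j, 0 ≤ X i j) (h : ‖X‖ < 1) :
    IsUnit (1 - X).det ∧ ∀ i j, 0 ≤ (1 - X)⁻¹ i j := by
  have hunit : IsUnit (1 - X) := isUnit_one_sub_of_norm_lt_one h
  have hdet : IsUnit (1 - X).det := (Matrix.isUnit_iff_isUnit_det _).mp hunit
  have hinv : (1 - X)⁻¹ = ∑' n : ℕ, X ^ n :=
    Matrix.inv_eq_right_inv (mul_neg_geom_series X h)
  refine ⟨hdet, fun i j => ?_⟩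
  rw [hinv]
  have hs : HasSum (fun n : ℕ => X ^ n) (∑' n : ℕ, X ^ n) :=
    (summable_geometric_of_norm_lt_one h).hasSum
  have hentry : HasSum (fun n : ℕ => (X ^ n) i j) ((∑' n : ℕ, X ^ n) i j) := by
    have := hs.mapL (entryCLM i j)
    exact this
  exact hentry.nonneg fun n => pow_entries_nonneg hX n i j

private lemma step_down {A : Matrix m m ℝ} {u t : ℝ} (hut : u ≤ t)
    (hdett : IsUnit (t • (1:Matrix m m ℝ) - A).det)
    (hQ : ∀ i j, 0 ≤ (t • (1:Matrix m m ℝ) - A)⁻¹ i j)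
    (hnorm : (t - u) * ‖(t • (1:Matrix m m ℝ) - A)⁻¹‖ < 1) :
    ∀ i j, 0 ≤ (u • (1:Matrix m m ℝ) - A)⁻¹ i j := by
  set B := (t • (1:Matrix m m ℝ) - A)⁻¹ with hB
  set X := (t - u) • B with hX
  have hXnn : ∀ i j, 0 ≤ X i j := fun i j => by
    simpa [hX] using mul_nonneg (sub_nonneg.mpr hut) (hQ i j)
  have hXnorm : ‖X‖ < 1 := by
    rw [hX, norm_smul, Real.norm_of_nonneg (sub_nonneg.mpr hut)]
    exact hnorm
  obtain ⟨hdet1X, h1X⟩ := one_sub_inv_nonneg hXnn hXnorm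
  have hRtB : (t • (1:Matrix m m ℝ) - A) * B = 1 := Matrix.mul_nonsing_inv _ hdett
  have hfact : (u • (1:Matrix m m ℝ) - A) = (t • (1:Matrix m m ℝ) - A) * (1 - X) := by
    rw [Matrix.mul_sub, Matrix.mul_one, hX, Matrix.mul_smul, hRtB]
    rw [sub_smul]
    abel
  have hinv : (u • (1:Matrix m m ℝ) - A)⁻¹ = (1 - X)⁻¹ * B := by
    apply Matrix.inv_eq_right_inv
    rw [hfact, Matrix.mul_assoc, ← Matrix.mul_assoc (1 - X),
      Matrix.mul_nonsing_inv _ hdet1X, Matrix.one_mul, hRtB]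
  rw [hinv]
  exact mul_entries_nonneg h1X hQ

lemma metzler_hurwitz_inv {M : Matrix m m ℝ} (hM : ∀ i j, i ≠ j → 0 ≤ M i j)
    (hH : ∀ μ ∈ spectrum ℂ (M.map (Complex.ofReal ·)), μ.re < 0) :
    IsUnit M.det ∧ ∀ i j, 0 ≤ (-(M⁻¹)) i j := by
  have hre : ∀ r : ℝ, 0 ≤ r → IsUnit (r • (1:Matrix m m ℝ) - M).det := by
    intro r hr
    rw [isUnit_iff_ne_zero]
    intro hdet0
    have hdetC : ((r • (1:Matrix m m ℝ) - M).map (Complex.ofReal ·)).det = 0 := by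
      have := (Complex.ofRealHom).map_det (r • (1:Matrix m m ℝ) - M)
      rw [hdet0] at this
      rw [map_zero] at this; exact this.symm
    obtain ⟨v, hv, hveq⟩ := Matrix.exists_mulVec_eq_zero_iff.mpr hdetC
    have hmap : (r • (1:Matrix m m ℝ) - M).map (Complex.ofReal ·)
        = (r:ℂ) • (1 : Matrix m m ℂ) - M.map (Complex.ofReal ·) := by
      ext i j
      by_cases h : i = j <;>
        simp [Matrix.map_apply, Matrix.one_apply, h, Matrix.smul_apply, Matrix.sub_apply]
    have heq : (M.map (Complex.ofReal ·)).mulVec v = (r:ℂ) • v := by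
      rw [hmap, Matrix.sub_mulVec, Matrix.smul_mulVec, Matrix.one_mulVec] at hveq
      exact (sub_eq_zero.mp hveq).symm
    have hmem : (r:ℂ) ∈ spectrum ℂ (M.map (Complex.ofReal ·)) :=
      (mem_spectrum_iff_eigen _ _).mpr ⟨v, hv, heq⟩
    have := hH _ hmem
    rw [Complex.ofReal_re] at this
    linarith
  set s : ℝ := 1 + ∑ i, |M i i| with hs
  have hs0 : 0 < s := by
    have : (0:ℝ) ≤ ∑ i, |M i i| := Finset.sum_nonneg fun i _ => abs_nonneg _
    rw [hs]; linarith
  set A : Matrix m m ℝ := M + s • 1 with hA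
  have hAnn : ∀ i j, 0 ≤ A i j := by
    intro i j
    by_cases h : i = j
    · subst h
      have h1 : A i i = M i i + s := by simp [hA, Matrix.one_apply]
      have h2 : -M i i ≤ |M i i| := neg_le_abs _
      have h3 : |M i i| ≤ ∑ k, |M k k| :=
        Finset.single_le_sum (f := fun k => |M k k|) (fun k _ => abs_nonneg _)
          (Finset.mem_univ i)
      rw [h1, hs]; linarith
    · have h1 : A i j = M i j := by simp [hA, Matrix.one_apply, h]
      rw [h1]; exact hM i j h
  have hdet : ∀ t : ℝ, s ≤ t → IsUnit (t • (1:Matrix m m ℝ) - A).det := by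
    intro t ht
    have heq : t • (1:Matrix m m ℝ) - A = (t - s) • (1:Matrix m m ℝ) - M := by
      rw [hA, sub_smul]; abel
    rw [heq]; exact hre (t - s) (by linarith)
  set t₁ : ℝ := max s (‖A‖ + 1) with ht₁
  have hst₁ : s ≤ t₁ := le_max_left _ _
  have ht₁A : ‖A‖ < t₁ := lt_of_lt_of_le (lt_add_one _) (le_max_right _ _)
  have ht₁pos : 0 < t₁ := lt_of_le_of_lt (norm_nonneg A) ht₁A
  have hQt₁ : ∀ i j, 0 ≤ (t₁ • (1:Matrix m m ℝ) - A)⁻¹ i j := by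
    set X := t₁⁻¹ • A with hXd
    have hXnn : ∀ i j, 0 ≤ X i j := fun i j => by
      simpa [hXd] using mul_nonneg (inv_nonneg.mpr ht₁pos.le) (hAnn i j)
    have hXnorm : ‖X‖ < 1 := by
      rw [hXd, norm_smul, Real.norm_of_nonneg (inv_nonneg.mpr ht₁pos.le)]
      rw [← inv_mul_cancel₀ ht₁pos.ne']
      exact mul_lt_mul_of_pos_left ht₁A (inv_pos.mpr ht₁pos)
    obtain ⟨hdX, hXinv⟩ := one_sub_inv_nonneg hXnn hXnorm
    have hfact : t₁ • (1:Matrix m m ℝ) - A = t₁ • ((1:Matrix m m ℝ) - X) := by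
      rw [smul_sub, hXd, smul_smul, mul_inv_cancel₀ ht₁pos.ne', one_smul]
    have hinv : (t₁ • (1:Matrix m m ℝ) - A)⁻¹ = t₁⁻¹ • ((1:Matrix m m ℝ) - X)⁻¹ := by
      apply Matrix.inv_eq_right_inv
      rw [hfact, Matrix.smul_mul, Matrix.mul_smul, smul_smul,
        mul_inv_cancel₀ ht₁pos.ne', Matrix.mul_nonsing_inv _ hdX, one_smul]
    intro i j
    rw [hinv]
    simpa using mul_nonneg (inv_nonneg.mpr ht₁pos.le) (hXinv i j)
  set D : Set ℝ := {t | t ∈ Set.Icc s t₁ ∧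
    ∀ u, t ≤ u → u ≤ t₁ → ∀ i j, 0 ≤ (u • (1:Matrix m m ℝ) - A)⁻¹ i j} with hD
  have ht₁D : t₁ ∈ D := by
    refine ⟨⟨hst₁, le_refl _⟩, fun u h1 h2 => ?_⟩
    have : u = t₁ := le_antisymm h2 h1
    subst this; exact hQt₁
  have hDne : D.Nonempty := ⟨t₁, ht₁D⟩
  have hDbdd : BddBelow D := ⟨s, fun t ht => ht.1.1⟩
  set c : ℝ := sInf D with hc
  have hsc : s ≤ c := le_csInf hDne fun t ht => ht.1.1
  have hct₁ : c ≤ t₁ := csInf_le hDbdd ht₁D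
  have hQabove : ∀ u, c < u → u ≤ t₁ → ∀ i j, 0 ≤ (u • (1:Matrix m m ℝ) - A)⁻¹ i j := by
    intro u hcu hut₁
    obtain ⟨t, htD, htu⟩ := exists_lt_of_csInf_lt hDne hcu
    exact htD.2 u htu.le hut₁
  have hQc : ∀ i j, 0 ≤ (c • (1:Matrix m m ℝ) - A)⁻¹ i j := by
    rcases eq_or_lt_of_le hct₁ with h | h
    · rw [h]; exact hQt₁
    · have hcontR : ContinuousAt (fun t : ℝ => t • (1:Matrix m m ℝ) - A) c :=
        ((continuous_id.smul continuous_const).sub continuous_const).continuousAt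
      have hunitc : IsUnit (c • (1:Matrix m m ℝ) - A) :=
        (Matrix.isUnit_iff_isUnit_det _).mpr (hdet c hsc)
      have hcontinv : ContinuousAt
          (fun t : ℝ => (t • (1:Matrix m m ℝ) - A)⁻¹) c := by
        have h1 : (fun t : ℝ => (t • (1:Matrix m m ℝ) - A)⁻¹)
            = fun t : ℝ => Ring.inverse (t • (1:Matrix m m ℝ) - A) := by
          funext t; exact Matrix.nonsing_inv_eq_ringInverse _
        rw [h1]
        have h2 : ContinuousAt Ring.inverse (c • (1:Matrix m m ℝ) - A) := by
          have := NormedRing.inverse_continuousAt hunitc.unit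
          exact this
        exact ContinuousAt.comp (g := Ring.inverse)
          (f := fun t : ℝ => t • (1:Matrix m m ℝ) - A) h2 hcontR
      intro i j
      have hentry : ContinuousAt
          (fun t : ℝ => entryCLM i j (t • (1:Matrix m m ℝ) - A)⁻¹) c :=
        ContinuousAt.comp (g := fun M => entryCLM i j M)
          (f := fun t : ℝ => (t • (1:Matrix m m ℝ) - A)⁻¹)
          ((entryCLM i j).continuous.continuousAt) hcontinv
      have hentry' : ContinuousAt
          (fun t : ℝ => (t • (1:Matrix m m ℝ) - A)⁻¹ i j) c := hentry
      refine ge_of_tendsto (hentry'.tendsto.mono_left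
        (nhdsWithin_le_nhds (s := Set.Ioi c))) ?_
      filter_upwards [Ioc_mem_nhdsGT_of_mem ⟨le_refl c, h⟩] with u hu
      exact hQabove u hu.1 hu.2 i j
  have hceqs : c = s := by
    by_contra hne
    have hsc' : s < c := lt_of_le_of_ne hsc (Ne.symm hne)
    set B := (c • (1:Matrix m m ℝ) - A)⁻¹ with hBd
    set β : ℝ := (1 + ‖B‖)⁻¹ with hβ
    have hβpos : 0 < β := by
      rw [hβ]; positivity
    set u : ℝ := max s (c - β) with hu
    have hus : s ≤ u := le_max_left _ _
    have huc : u < c := by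
      rw [hu, max_lt_iff]
      exact ⟨hsc', by linarith⟩
    have huD : u ∈ D := by
      refine ⟨⟨hus, le_trans huc.le hct₁⟩, fun w hw1 hw2 => ?_⟩
      rcases lt_or_ge w c with hwc | hwc
      · refine step_down hwc.le (hdet c hsc) hQc ?_
        have hcw : c - w ≤ β := by
          have : c - β ≤ w := le_trans (le_max_right _ _) hw1
          linarith
        have hBnn : (0:ℝ) ≤ ‖B‖ := norm_nonneg _
        have h1 : (c - w) * ‖B‖ ≤ β * ‖B‖ :=
          mul_le_mul_of_nonneg_right hcw hBnn
        have h2 : β * ‖B‖ < 1 := by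
          rw [hβ]
          rw [inv_mul_lt_iff₀ (by positivity)]
          linarith
        exact lt_of_le_of_lt h1 h2
      · rcases eq_or_lt_of_le hwc with h | h
        · rw [← h]; exact hQc
        · exact hQabove w h hw2
    have := csInf_le hDbdd huD
    rw [← hc] at this
    linarith
  have hQs : ∀ i j, 0 ≤ (s • (1:Matrix m m ℝ) - A)⁻¹ i j := by rw [← hceqs]; exact hQc
  have hsA : s • (1:Matrix m m ℝ) - A = -M := by rw [hA]; abel
  have hdetnegM : IsUnit (-M).det := by rw [← hsA]; exact hdet s (le_refl s)
  have hdetM : IsUnit M.det := by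
    rw [isUnit_iff_ne_zero] at hdetnegM ⊢
    intro h0
    rw [Matrix.det_neg, h0, mul_zero] at hdetnegM
    exact hdetnegM rfl
  refine ⟨hdetM, fun i j => ?_⟩
  have hinvneg : (-M)⁻¹ = -(M⁻¹) := by
    apply Matrix.inv_eq_right_inv
    rw [neg_mul_neg]
    exact Matrix.mul_nonsing_inv _ hdetM
  have := hQs i j
  rw [hsA, hinvneg] at this
  exact this

end InverseNonneg

section Helpers

variable {k : Type*} [Fintype k] [DecidableEq k]

lemma inv_mulVec_cancel {M : Matrix k k ℝ} (hdet : IsUnit M.det) (x : k → ℝ) :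
    M.mulVec ((-(M⁻¹)).mulVec x) = -x := by
  rw [Matrix.mulVec_mulVec, Matrix.mul_neg, Matrix.mul_nonsing_inv _ hdet, Matrix.neg_mulVec,
    Matrix.one_mulVec]

lemma neg_inv_mulVec_one_pos {M : Matrix k k ℝ} (hdet : IsUnit M.det)
    (hP : ∀ i j, 0 ≤ (-(M⁻¹)) i j) (i : k) :
    0 < (-(M⁻¹)).mulVec (fun _ => (1:ℝ)) i := by
  have hrow : ∃ j, M⁻¹ i j ≠ 0 := by
    by_contra hall
    push_neg at hall
    have h1 : (M⁻¹ * M) i i = 1 := by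
      rw [Matrix.nonsing_inv_mul _ hdet, Matrix.one_apply_eq]
    rw [Matrix.mul_apply] at h1
    have h2 : ∑ j, M⁻¹ i j * M j i = 0 :=
      Finset.sum_eq_zero fun j _ => by rw [hall j, zero_mul]
    rw [h2] at h1
    exact one_ne_zero h1.symm
  obtain ⟨j, hj⟩ := hrow
  have hPij : 0 < (-(M⁻¹)) i j :=
    lt_of_le_of_ne (hP i j) (by simpa [eq_comm, neg_eq_zero] using hj)
  have : (-(M⁻¹)).mulVec (fun _ => (1:ℝ)) i = ∑ l, (-(M⁻¹)) i l := by
    simp [Matrix.mulVec, dotProduct]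
  rw [this]
  exact Finset.sum_pos' (fun l _ => hP i l) ⟨j, Finset.mem_univ j, hPij⟩

lemma nonneg_mulVec_nonneg {P : Matrix k k ℝ} (hP : ∀ i j, 0 ≤ P i j)
    {x : k → ℝ} (hx : ∀ i, 0 ≤ x i) (i : k) : 0 ≤ P.mulVec x i :=
  Finset.sum_nonneg fun j _ => mul_nonneg (hP i j) (hx j)

lemma nonneg_mulVec_nonpos {P : Matrix k k ℝ} (hP : ∀ i j, 0 ≤ P i j)
    {x : k → ℝ} (hx : ∀ i, x i ≤ 0) (i : k) : P.mulVec x i ≤ 0 :=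
  Finset.sum_nonpos fun j _ => mul_nonpos_of_nonneg_of_nonpos (hP i j) (hx j)

lemma dot_mono {h : k → ℝ} (hh : ∀ i, 0 ≤ h i) {x y : k → ℝ} (hxy : ∀ i, x i ≤ y i) :
    h ⬝ᵥ x ≤ h ⬝ᵥ y :=
  Finset.sum_le_sum fun i _ => mul_le_mul_of_nonneg_left (hxy i) (hh i)

end Helpers

section Kron
open scoped Kronecker

lemma kronsum_mulVec {R : Type*} [CommRing R] {n : Type*} [Fintype n] [DecidableEq n]
    (A : Matrix n n R) (v w : n → R) (p : n × n) :
    (A ⊗ₖ (1 : Matrix n n R) + (1 : Matrix n n R) ⊗ₖ A).mulVec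
      (fun q => v q.1 * w q.2) p = A.mulVec v p.1 * w p.2 + v p.1 * A.mulVec w p.2 := by
  obtain ⟨i, j⟩ := p
  simp only [Matrix.mulVec, dotProduct]
  rw [Fintype.sum_prod_type]
  have expand : ∀ k l : n,
      (A ⊗ₖ (1 : Matrix n n R) + (1 : Matrix n n R) ⊗ₖ A) (i, j) (k, l) * (v k * w l)
      = (if j = l then A i k * v k * w l else 0)
        + (if i = k then A j l * v k * w l else 0) := by
    intro k l
    by_cases h1 : j = l <;> by_cases h2 : i = k <;>
      simp [Matrix.add_apply, Matrix.kroneckerMap_apply, Matrix.one_apply, h1, h2] <;> ring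
  calc ∑ k, ∑ l, (A ⊗ₖ (1 : Matrix n n R) + (1 : Matrix n n R) ⊗ₖ A) (i, j) (k, l)
        * (v k * w l)
      = ∑ k, ((A i k * v k * w j) + (if i = k then ∑ l, A j l * v k * w l else 0)) := by
        refine Finset.sum_congr rfl fun k _ => ?_
        rw [Finset.sum_congr rfl fun l _ => expand k l, Finset.sum_add_distrib]
        congr 1
        · rw [Finset.sum_ite_eq Finset.univ j (fun l => A i k * v k * w l)]
          simp
        · split_ifs with h <;> simp
    _ = (∑ k, A i k * v k * w j) + (∑ l, A j l * v i * w l) := by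
        rw [Finset.sum_add_distrib]
        congr 1
        rw [Finset.sum_ite_eq Finset.univ i (fun k => ∑ l, A j l * v k * w l)]
        simp
    _ = A.mulVec v i * w j + v i * A.mulVec w j := by
        simp only [Matrix.mulVec, dotProduct]
        rw [Finset.sum_mul, Finset.mul_sum]
        congr 1
        exact Finset.sum_congr rfl fun l _ => by ring

end Kron


theorem h2_norm_characterization' (nx nw ny : ℕ)
    (F : Matrix (Fin nx) (Fin nx) ℝ) (G : Matrix (Fin nx) (Fin nw) ℝ)
    (H : Matrix (Fin ny) (Fin nx) ℝ)
    (hF : ∀ i j, i ≠ j → 0 ≤ F i j) (hG : ∀ i j, 0 ≤ G i j) (hH : ∀ i j, 0 ≤ H i j)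
    (γ : ℝ) (hγ : 0 < γ)
    (Fsum : Matrix (Fin nx × Fin nx) (Fin nx × Fin nx) ℝ)
    (hFsum : Fsum = Matrix.kroneckerMap (· * ·) F (1 : Matrix (Fin nx) (Fin nx) ℝ)
        + Matrix.kroneckerMap (· * ·) (1 : Matrix (Fin nx) (Fin nx) ℝ) F)
    (Ht : Fin nx × Fin nx → ℝ) (hHt : ∀ p, Ht p = ∑ i : Fin ny, H i p.1 * H i p.2)
    (Gt : Fin nx × Fin nx → ℝ) (hGt : ∀ p, Gt p = ∑ j : Fin nw, G p.1 j * G p.2 j) :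
    ((∀ μ ∈ spectrum ℂ (F.map (Complex.ofReal ·)), μ.re < 0) ∧
        -(Ht ⬝ᵥ (Fsum⁻¹.mulVec Gt)) < γ ^ 2) ↔
      ∃ ω : Fin nx × Fin nx → ℝ, (∀ p, 0 < ω p) ∧
        Ht ⬝ᵥ ω < γ ^ 2 ∧ ∀ p, Fsum.mulVec ω p + Gt p < 0 := by
  have hγ2 : 0 < γ ^ 2 := pow_pos hγ 2
  have hGt0 : ∀ p, 0 ≤ Gt p := fun p => by
    rw [hGt p]; exact Finset.sum_nonneg fun j _ => mul_nonneg (hG _ _) (hG _ _)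
  have hHt0 : ∀ p, 0 ≤ Ht p := fun p => by
    rw [hHt p]; exact Finset.sum_nonneg fun i _ => mul_nonneg (hH _ _) (hH _ _)
  have hFsumMetz : ∀ p q : Fin nx × Fin nx, p ≠ q → 0 ≤ Fsum p q := by
    rintro ⟨i, j⟩ ⟨k, l⟩ hne
    rw [hFsum]
    by_cases h1 : i = k <;> by_cases h2 : j = l
    · exact absurd (by rw [h1, h2]) hne
    · simp only [Matrix.add_apply, Matrix.kroneckerMap_apply, Matrix.one_apply, h1, h2,
        if_true, if_false, mul_zero, mul_one, zero_add, one_mul, zero_mul, add_zero]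
      exact hF j l h2
    · simp only [Matrix.add_apply, Matrix.kroneckerMap_apply, Matrix.one_apply, h1, h2,
        if_true, if_false, mul_zero, mul_one, zero_add, one_mul, zero_mul, add_zero]
      exact hF i k h1
    · simp [Matrix.add_apply, Matrix.kroneckerMap_apply, Matrix.one_apply, h1, h2]
  have hmapFsum : Fsum.map (Complex.ofReal ·) =
      Matrix.kroneckerMap (· * ·) (F.map (Complex.ofReal ·)) (1 : Matrix (Fin nx) (Fin nx) ℂ)
        + Matrix.kroneckerMap (· * ·) (1 : Matrix (Fin nx) (Fin nx) ℂ)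
          (F.map (Complex.ofReal ·)) := by
    rw [hFsum]
    ext ⟨i, j⟩ ⟨k, l⟩
    by_cases h1 : i = k <;> by_cases h2 : j = l <;>
      simp [Matrix.map_apply, Matrix.add_apply, Matrix.kroneckerMap_apply, Matrix.one_apply,
        h1, h2]
  constructor
  · rintro ⟨hHurF, hbound⟩
    obtain ⟨hdetF, hPF⟩ := metzler_hurwitz_inv hF hHurF
    set v : Fin nx → ℝ := (-(F⁻¹)).mulVec (fun _ => 1) with hv
    have hvpos : ∀ i, 0 < v i := fun i => neg_inv_mulVec_one_pos hdetF hPF i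
    have hFv : F.mulVec v = -(fun _ => (1:ℝ)) := inv_mulVec_cancel hdetF _
    have hω₀ : ∀ p : Fin nx × Fin nx, Fsum.mulVec (fun q => v q.1 * v q.2) p < 0 := by
      intro p
      rw [hFsum, kronsum_mulVec, hFv]
      simp only [Pi.neg_apply]
      have h1 := hvpos p.1
      have h2 := hvpos p.2
      nlinarith
    have hHurFsum : ∀ μ ∈ spectrum ℂ (Fsum.map (Complex.ofReal ·)), μ.re < 0 :=
      metzler_stable Fsum hFsumMetz _ (fun p => mul_pos (hvpos p.1) (hvpos p.2)) hω₀
    obtain ⟨hdetS, hPS⟩ := metzler_hurwitz_inv hFsumMetz hHurFsum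
    have hupos : ∀ p, 0 < (-(Fsum⁻¹)).mulVec (fun _ => (1:ℝ)) p :=
      fun p => neg_inv_mulVec_one_pos hdetS hPS p
    set u : Fin nx × Fin nx → ℝ := (-(Fsum⁻¹)).mulVec (fun _ => 1) with hu
    have hFsu : Fsum.mulVec u = -(fun _ => (1:ℝ)) := inv_mulVec_cancel hdetS _
    set q : ℝ := Ht ⬝ᵥ ((-(Fsum⁻¹)).mulVec Gt) with hq
    have hqeq : -(Ht ⬝ᵥ (Fsum⁻¹.mulVec Gt)) = q := by
      rw [hq, Matrix.neg_mulVec, dotProduct_neg]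
    have hqbound : q < γ ^ 2 := hqeq ▸ hbound
    set C : ℝ := Ht ⬝ᵥ u with hC
    have hC0 : 0 ≤ C :=
      Finset.sum_nonneg fun p _ => mul_nonneg (hHt0 p) (hupos p).le
    set ε : ℝ := (γ ^ 2 - q) / (2 * (C + 1)) with hε
    have hεpos : 0 < ε := div_pos (by linarith) (by linarith)
    have hεC : ε * (C + 1) = (γ ^ 2 - q) / 2 := by
      rw [hε]; field_simp
    refine ⟨(-(Fsum⁻¹)).mulVec Gt + ε • u, ?_, ?_, ?_⟩
    · intro p
      have h1 : 0 ≤ (-(Fsum⁻¹)).mulVec Gt p := nonneg_mulVec_nonneg hPS hGt0 p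
      have h2 : 0 < ε * u p := mul_pos hεpos (hupos p)
      have h3 : ((-(Fsum⁻¹)).mulVec Gt + ε • u) p
          = (-(Fsum⁻¹)).mulVec Gt p + ε * u p := rfl
      rw [h3]; linarith
    · rw [dotProduct_add, dotProduct_smul, smul_eq_mul, ← hq, ← hC]
      have h4 : ε * C ≤ ε * (C + 1) := by nlinarith
      linarith
    · intro p
      have h1 : Fsum.mulVec ((-(Fsum⁻¹)).mulVec Gt + ε • u)
          = Fsum.mulVec ((-(Fsum⁻¹)).mulVec Gt) + ε • Fsum.mulVec u := by
        rw [Matrix.mulVec_add, Matrix.mulVec_smul]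
      have h2 : Fsum.mulVec ((-(Fsum⁻¹)).mulVec Gt) = -Gt := inv_mulVec_cancel hdetS Gt
      have h6 : Fsum.mulVec ((-(Fsum⁻¹)).mulVec Gt + ε • u) p = -Gt p + ε * (-1) := by
        rw [h1, h2, hFsu]; rfl
      rw [h6]
      linarith
  · rintro ⟨ω, hωpos, hωHt, hωF⟩
    have hFsneg : ∀ p, Fsum.mulVec ω p < 0 := fun p => by
      have := hωF p; have := hGt0 p; linarith
    have hHurFsum : ∀ μ ∈ spectrum ℂ (Fsum.map (Complex.ofReal ·)), μ.re < 0 :=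
      metzler_stable Fsum hFsumMetz ω hωpos hFsneg
    have hHurF : ∀ μ ∈ spectrum ℂ (F.map (Complex.ofReal ·)), μ.re < 0 := by
      intro μ hμ
      obtain ⟨w, hw, hweq⟩ := (mem_spectrum_iff_eigen _ μ).mp hμ
      have hV : (Fsum.map (Complex.ofReal ·)).mulVec (fun q => w q.1 * w q.2)
          = (2 * μ) • (fun q => w q.1 * w q.2) := by
        funext p
        rw [hmapFsum, kronsum_mulVec, hweq]
        have h0 : ((2 * μ) • fun q : Fin nx × Fin nx => w q.1 * w q.2) p
            = (2 * μ) * (w p.1 * w p.2) := rfl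
        rw [h0]
        have h1 : (μ • w) p.1 = μ * w p.1 := rfl
        have h2 : (μ • w) p.2 = μ * w p.2 := rfl
        rw [h1, h2]; ring
      have hwne : (fun q : Fin nx × Fin nx => w q.1 * w q.2) ≠ 0 := by
        obtain ⟨i, hi⟩ := Function.ne_iff.mp hw
        refine Function.ne_iff.mpr ⟨(i, i), ?_⟩
        simpa using mul_ne_zero hi hi
      have hmem : (2 * μ) ∈ spectrum ℂ (Fsum.map (Complex.ofReal ·)) :=
        (mem_spectrum_iff_eigen _ _).mpr ⟨_, hwne, hV⟩
      have h2μ := hHurFsum _ hmem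
      have h2re : (2 * μ).re = 2 * μ.re := by simp [Complex.mul_re]
      rw [h2re] at h2μ
      linarith
    obtain ⟨hdetS, hPS⟩ := metzler_hurwitz_inv hFsumMetz hHurFsum
    refine ⟨hHurF, ?_⟩
    have hkey : ∀ p, (-(Fsum⁻¹)).mulVec Gt p ≤ ω p := by
      intro p
      have h1 : (-(Fsum⁻¹)).mulVec (fun q => Fsum.mulVec ω q + Gt q) p ≤ 0 :=
        nonneg_mulVec_nonpos hPS (fun q => (hωF q).le) p
      have h2 : (-(Fsum⁻¹)).mulVec (fun q => Fsum.mulVec ω q + Gt q)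
          = (-(Fsum⁻¹)).mulVec (Fsum.mulVec ω) + (-(Fsum⁻¹)).mulVec Gt := by
        rw [show (fun q => Fsum.mulVec ω q + Gt q) = Fsum.mulVec ω + Gt from rfl,
          Matrix.mulVec_add]
      have h3 : (-(Fsum⁻¹)).mulVec (Fsum.mulVec ω) = -ω := by
        rw [Matrix.mulVec_mulVec, Matrix.neg_mul, Matrix.nonsing_inv_mul _ hdetS,
          Matrix.neg_mulVec, Matrix.one_mulVec]
      rw [h2, h3] at h1
      have h4 : (-ω + (-(Fsum⁻¹)).mulVec Gt) p = -ω p + (-(Fsum⁻¹)).mulVec Gt p := rfl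
      rw [h4] at h1
      linarith
    have hfin : Ht ⬝ᵥ ((-(Fsum⁻¹)).mulVec Gt) ≤ Ht ⬝ᵥ ω := dot_mono hHt0 hkey
    have heq : -(Ht ⬝ᵥ (Fsum⁻¹.mulVec Gt)) = Ht ⬝ᵥ ((-(Fsum⁻¹)).mulVec Gt) := by
      rw [Matrix.neg_mulVec, dotProduct_neg]
    rw [heq]
    exact lt_of_le_of_lt hfin hωHt

theorem h2_norm_characterization (nx nw ny : ℕ)
    (F : Matrix (Fin nx) (Fin nx) ℝ) (G : Matrix (Fin nx) (Fin nw) ℝ)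
    (H : Matrix (Fin ny) (Fin nx) ℝ)
    (hF : Metzler F) (hG : ∀ i j, 0 ≤ G i j) (hH : ∀ i j, 0 ≤ H i j)
    (γ : ℝ) (hγ : 0 < γ)
    -- the Kronecker sum `F ⊕ F`
    (Fsum : Matrix (Fin nx × Fin nx) (Fin nx × Fin nx) ℝ)
    (hFsum : Fsum = F ⊗ₖ (1 : Matrix (Fin nx) (Fin nx) ℝ)
        + (1 : Matrix (Fin nx) (Fin nx) ℝ) ⊗ₖ F)
    -- the row vector `H̃ = Σᵢ Hᵢ ⊗ Hᵢ` built from the rows of `H`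
    (Ht : Fin nx × Fin nx → ℝ) (hHt : ∀ p, Ht p = ∑ i : Fin ny, H i p.1 * H i p.2)
    -- the column vector `G̃ = Σⱼ Gⱼ ⊗ Gⱼ` built from the columns of `G`
    (Gt : Fin nx × Fin nx → ℝ) (hGt : ∀ p, Gt p = ∑ j : Fin nw, G p.1 j * G p.2 j) :
    (Hurwitz F ∧ -(Ht ⬝ᵥ (Fsum⁻¹.mulVec Gt)) < γ ^ 2) ↔
      ∃ ω : Fin nx × Fin nx → ℝ, (∀ p, 0 < ω p) ∧
        Ht ⬝ᵥ ω < γ ^ 2 ∧ ∀ p, Fsum.mulVec ω p + Gt p < 0 :=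
  h2_norm_characterization' nx nw ny F G H hF hG hH γ hγ Fsum hFsum Ht hHt Gt hGt
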